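/- arXiv:2011.15006 — 2 statements merged into one kernel-verified Lean document; each statement's English description precedes it below -/
import Mathlib

section
/- Let ω > 0, k > 3, and let f^{in} ∈ L¹(ℝ⁶) ∩ L^∞(ℝ⁶) be measurable with f^{in} ≥ 0 a.e. and M_k(f^{in}) < ∞. Define ρ₀(t,x) := ∫_{ℝ³} f^{in}(X(0;t,x,v), V(0;t,x,v)) dv, where (X,V) are the magnetized free characteristics. Then there exists a constant C > 0, depending only on k, ‖f^{in}‖₁, ‖f^{in}‖_∞ and M_k(f^{in}), such that for all t ≥ 0, ‖ρ₀(t,·)‖_{L^{(3k+9)/(k+6)}(ℝ³)} ≤ C. -/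
open MeasureTheory Real
open scoped ENNReal

/-- The velocity component of the magnetized free characteristics. -/
noncomputable def Vc (ω s t : ℝ) (v : EuclideanSpace ℝ (Fin 3)) : EuclideanSpace ℝ (Fin 3) :=
  WithLp.toLp 2 ![v 0 * Real.cos (ω * (s - t)) + v 1 * Real.sin (ω * (s - t)),
    -(v 0 * Real.sin (ω * (s - t))) + v 1 * Real.cos (ω * (s - t)),
    v 2]

/-- The position component of the magnetized free characteristics. -/
noncomputable def Xc (ω s t : ℝ) (x v : EuclideanSpace ℝ (Fin 3)) : EuclideanSpace ℝ (Fin 3) :=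
  WithLp.toLp 2 ![x 0 + v 0 / ω * Real.sin (ω * (s - t)) + v 1 / ω * (1 - Real.cos (ω * (s - t))),
    x 1 + v 0 / ω * (Real.cos (ω * (s - t)) - 1) + v 1 / ω * Real.sin (ω * (s - t)),
    x 2 + v 2 * (s - t)]

/-- The `k`-th order velocity moment `M_k(f) = ∬ |v|^k f(x,v) dx dv`. -/
noncomputable def momentVel (k : ℝ)
    (f : EuclideanSpace ℝ (Fin 3) × EuclideanSpace ℝ (Fin 3) → ℝ) : ℝ≥0∞ :=
  ∫⁻ z : EuclideanSpace ℝ (Fin 3) × EuclideanSpace ℝ (Fin 3),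
    ENNReal.ofReal (‖z.2‖ ^ k * f z)

/-!
The characteristic map `(x, v) ↦ (X(0;t,x,v), V(0;t,x,v))` is a velocity-dependent translation
in `x` followed by a rotation in `v`. It therefore preserves Lebesgue measure on `ℝ³ × ℝ³` and
the speed `|v|`, so the transported density `g = f^{in} ∘ (X, V)` has the same `L¹` norm,
`L^∞` norm and `k`-th moment as `f^{in}`, for every `t`.

For such a `g`, splitting `ρ(x) = ∫ g(x, v) dv` at `|v| = R` and optimizing in `R` gives
`ρ(x) ≤ (‖g‖_∞ |B₁| + 1) m_k(x)^{3/(k+3)}`, where `m_k(x) = ∫ |v|^k g(x, v) dv`. Hence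
`‖ρ‖_{(k+3)/3}` is controlled by `M_k`, and Hölder interpolation with `‖ρ‖₁ = ‖g‖₁` bounds
`ρ` in `L^p` for `1 ≤ p ≤ (k+3)/3`. This covers `p = (3k+9)/(k+6)` because `k > 3`.
-/

local notation "ℝ³" => EuclideanSpace ℝ (Fin 3)

open Metric Module

theorem measurePreserving_add_prodMap {E F : Type*} [MeasurableSpace E] [AddGroup E]
    [MeasurableAdd₂ E] [MeasurableSpace F] {μ : Measure E} [μ.IsAddRightInvariant] [SFinite μ]
    {ν : Measure F} [SFinite ν] {s : F → E} (hs : Measurable s) {g : F → F}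
    (hg : MeasurePreserving g ν ν) :
    MeasurePreserving (fun z : E × F => (z.1 + s z.2, g z.2)) (μ.prod ν) (μ.prod ν) := by
  have hskew : MeasurePreserving (fun z : F × E => (g z.1, z.2 + s z.1)) (ν.prod μ) (ν.prod μ) :=
    hg.skew_product (g := fun v x => x + s v) (measurable_snd.add (hs.comp measurable_fst))
      (.of_forall fun v => (measurePreserving_add_right μ (s v)).map_eq)
  exact Measure.measurePreserving_swap.comp (hskew.comp Measure.measurePreserving_swap)

theorem ENNReal.ofReal_rpow_toReal_rpow {M : ℝ≥0∞} (hM : M ≠ ⊤) {a b : ℝ} (hab : 0 ≤ b / a) :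
    ENNReal.ofReal ((M.toReal ^ (1 / a)) ^ b) = M ^ (b / a) := by
  rw [← Real.rpow_mul ENNReal.toReal_nonneg, one_div_mul_eq_div, ENNReal.toReal_rpow,
    ENNReal.ofReal_toReal (ENNReal.rpow_ne_top_of_nonneg hab hM)]

theorem ENNReal.lintegral_rpow_interpolate_le {α : Type*} [MeasurableSpace α] {μ : Measure α}
    {f : α → ℝ≥0∞} (hf : AEMeasurable f μ) {θ q : ℝ} (hθ₀ : 0 ≤ θ) (hθ₁ : θ ≤ 1) (hq : 0 ≤ q) :
    ∫⁻ a, f a ^ (θ + (1 - θ) * q) ∂μ ≤ (∫⁻ a, f a ∂μ) ^ θ * (∫⁻ a, f a ^ q ∂μ) ^ (1 - θ) := by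
  convert ENNReal.lintegral_mul_norm_pow_le hf (hf.pow_const q) hθ₀ (sub_nonneg.2 hθ₁)
    (add_sub_cancel θ 1) using 3 with a
  rw [← ENNReal.rpow_mul, ENNReal.rpow_add_of_nonneg _ _ hθ₀ (by nlinarith), mul_comm q]

theorem lintegral_le_mul_measure_closedBall_add_moment {F : Type*} [NormedAddCommGroup F]
    [MeasurableSpace F] [OpensMeasurableSpace F] (ν : Measure F) {k R : ℝ} (hk : 0 ≤ k)
    (hR : 0 < R) {c : ℝ≥0∞} {w : F → ℝ≥0∞} (hbd : ∀ᵐ v ∂ν, w v ≤ c) :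
    ∫⁻ v, w v ∂ν ≤ c * ν (closedBall 0 R) +
      (ENNReal.ofReal (R ^ k))⁻¹ * ∫⁻ v, ENNReal.ofReal (‖v‖ ^ k) * w v ∂ν := by
  have hRk : ENNReal.ofReal (R ^ k) ≠ 0 := by positivity
  rw [← lintegral_add_compl w measurableSet_closedBall]
  gcongr ?_ + ?_
  · calc ∫⁻ v in closedBall 0 R, w v ∂ν ≤ ∫⁻ _ in closedBall 0 R, c ∂ν :=
          lintegral_mono_ae (ae_restrict_of_ae hbd)
      _ = c * ν (closedBall 0 R) := setLIntegral_const _ _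
  · rw [← lintegral_const_mul' _ _ (ENNReal.inv_ne_top.2 hRk)]
    refine (setLIntegral_mono' measurableSet_closedBall.compl fun v hv => ?_).trans
      (setLIntegral_le_lintegral _ _)
    have hRv : R < ‖v‖ := by simpa using hv
    rw [← mul_assoc, ← ENNReal.div_eq_inv_mul]
    calc w v = 1 * w v := (one_mul _).symm
      _ ≤ _ := by
        gcongr
        rw [ENNReal.le_div_iff_mul_le (.inl hRk) (.inl ENNReal.ofReal_ne_top), one_mul]
        gcongr

section VelocityMoments

variable {E F : Type*} [MeasurableSpace E] (μ : Measure E)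
  [NormedAddCommGroup F] [NormedSpace ℝ F] [MeasurableSpace F] [BorelSpace F]
  [FiniteDimensional ℝ F] [Nontrivial F] (ν : Measure F) [ν.IsAddHaarMeasure]

theorem lintegral_le_mul_moment_rpow {k : ℝ} (hk : 0 < k) {c : ℝ≥0∞} {w : F → ℝ≥0∞}
    (hw : Measurable w) (hbd : ∀ᵐ v ∂ν, w v ≤ c) :
    ∫⁻ v, w v ∂ν ≤ (c * ν (closedBall 0 1) + 1) *
      (∫⁻ v, ENNReal.ofReal (‖v‖ ^ k) * w v ∂ν) ^ (finrank ℝ F / (k + finrank ℝ F)) := by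
  set d : ℝ := (finrank ℝ F : ℝ)
  set M := ∫⁻ v, ENNReal.ofReal (‖v‖ ^ k) * w v ∂ν
  have hd : 0 < d := Nat.cast_pos.2 finrank_pos
  rcases eq_or_ne M ⊤ with hM | hM
  · rw [hM, ENNReal.top_rpow_of_pos (by positivity), ENNReal.mul_top (by positivity)]
    exact le_top
  rcases eq_or_ne M 0 with hM0 | hM0
  · have hmoment : ∀ᵐ v ∂ν, ENNReal.ofReal (‖v‖ ^ k) * w v = 0 :=
      (lintegral_eq_zero_iff (by fun_prop)).1 hM0
    have hw0 : ∀ᵐ v ∂ν, w v = 0 := by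
      filter_upwards [hmoment, measure_eq_zero_iff_ae_notMem.1 (measure_singleton (0 : F))]
        with v hv (hv0 : v ≠ 0)
      exact (mul_eq_zero.1 hv).resolve_left
        (ENNReal.ofReal_pos.2 (Real.rpow_pos_of_pos (norm_pos_iff.2 hv0) k)).ne'
    simp [lintegral_congr_ae hw0]
  -- `R ^ (k + d) = M` balances the ball term `c R^d` against the tail term `M / R^k`.
  set R := M.toReal ^ (1 / (k + d))
  have hR : 0 < R := Real.rpow_pos_of_pos (ENNReal.toReal_pos hM0 hM) _
  have hRd : ENNReal.ofReal (R ^ finrank ℝ F) = M ^ (d / (k + d)) := by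
    rw [← Real.rpow_natCast, ENNReal.ofReal_rpow_toReal_rpow hM (by positivity)]
  have hRk : ENNReal.ofReal (R ^ k) = M ^ (k / (k + d)) :=
    ENNReal.ofReal_rpow_toReal_rpow hM (by positivity)
  have htail : (M ^ (k / (k + d)))⁻¹ * M = M ^ (d / (k + d)) := by
    nth_rewrite 2 [← ENNReal.rpow_one M]
    rw [← ENNReal.rpow_neg, ← ENNReal.rpow_add _ _ hM0 hM]
    congr 1
    field_simp
    ring
  calc ∫⁻ v, w v ∂ν
      ≤ c * ν (closedBall 0 R) + (ENNReal.ofReal (R ^ k))⁻¹ * M :=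
        lintegral_le_mul_measure_closedBall_add_moment ν hk.le hR hbd
    _ = (c * ν (closedBall 0 1) + 1) * M ^ (d / (k + d)) := by
        rw [Measure.addHaar_closedBall' ν 0 hR.le, hRd, hRk, htail]
        ring

theorem lintegral_rpow_lintegral_le_mul_moment {k : ℝ} (hk : 0 < k) {c : ℝ≥0∞}
    {W : E × F → ℝ≥0∞} (hW : Measurable W) (hbd : ∀ᵐ z ∂μ.prod ν, W z ≤ c) :
    ∫⁻ x, (∫⁻ v, W (x, v) ∂ν) ^ ((k + finrank ℝ F) / finrank ℝ F) ∂μ ≤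
      (c * ν (closedBall 0 1) + 1) ^ ((k + finrank ℝ F) / finrank ℝ F) *
        ∫⁻ x, ∫⁻ v, ENNReal.ofReal (‖v‖ ^ k) * W (x, v) ∂ν ∂μ := by
  set d : ℝ := (finrank ℝ F : ℝ)
  have hd : 0 < d := Nat.cast_pos.2 finrank_pos
  have hmoment : Measurable fun z : E × F => ENNReal.ofReal (‖z.2‖ ^ k) * W z := by fun_prop
  rw [← lintegral_const_mul _ hmoment.lintegral_prod_right']
  refine lintegral_mono_ae ?_
  filter_upwards [Measure.ae_ae_of_ae_prod hbd] with x hx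
  calc (∫⁻ v, W (x, v) ∂ν) ^ ((k + d) / d)
      ≤ ((c * ν (closedBall 0 1) + 1) *
          (∫⁻ v, ENNReal.ofReal (‖v‖ ^ k) * W (x, v) ∂ν) ^ (d / (k + d))) ^ ((k + d) / d) :=
        ENNReal.rpow_le_rpow (lintegral_le_mul_moment_rpow ν hk (hW.comp measurable_prodMk_left) hx)
          (by positivity)
    _ = _ := by
        have hexp : d / (k + d) * ((k + d) / d) = 1 := by field_simp
        rw [ENNReal.mul_rpow_of_nonneg _ _ (by positivity), ← ENNReal.rpow_mul, hexp,
          ENNReal.rpow_one]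

theorem exists_lintegral_rpow_lintegral_le {k p : ℝ} (hk : 0 < k) (hp : 1 ≤ p)
    (hpq : p ≤ (k + finrank ℝ F) / finrank ℝ F) {c A B : ℝ≥0∞} (hc : c ≠ ⊤) (hA : A ≠ ⊤)
    (hB : B ≠ ⊤) :
    ∃ D : ℝ≥0∞, D ≠ ⊤ ∧ ∀ W : E × F → ℝ≥0∞, Measurable W → (∀ᵐ z ∂μ.prod ν, W z ≤ c) →
      ∫⁻ x, ∫⁻ v, W (x, v) ∂ν ∂μ ≤ A →
      ∫⁻ x, ∫⁻ v, ENNReal.ofReal (‖v‖ ^ k) * W (x, v) ∂ν ∂μ ≤ B →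
      ∫⁻ x, (∫⁻ v, W (x, v) ∂ν) ^ p ∂μ ≤ D := by
  set d : ℝ := (finrank ℝ F : ℝ)
  set q := (k + d) / d
  have hd : 0 < d := Nat.cast_pos.2 finrank_pos
  have hq : 1 < q := by rw [lt_div_iff₀ hd]; linarith
  set θ := (q - p) / (q - 1)
  have hθ₀ : 0 ≤ θ := div_nonneg (by linarith) (by linarith)
  have hθ₁ : θ ≤ 1 := (div_le_one (by linarith)).2 (by linarith)
  have hpθ : p = θ + (1 - θ) * q := by
    linear_combination div_mul_cancel₀ (q - p) (sub_pos.2 hq).ne'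
  set C := (c * ν (closedBall 0 1) + 1) ^ q
  have hC : C ≠ ⊤ := by
    have hball := (measure_closedBall_lt_top (μ := ν) (x := 0) (r := 1)).ne
    finiteness
  refine ⟨A ^ θ * (C * B) ^ (1 - θ), by finiteness, fun W hW hbd hmass hmom => ?_⟩
  calc ∫⁻ x, (∫⁻ v, W (x, v) ∂ν) ^ p ∂μ
      ≤ (∫⁻ x, ∫⁻ v, W (x, v) ∂ν ∂μ) ^ θ * (∫⁻ x, (∫⁻ v, W (x, v) ∂ν) ^ q ∂μ) ^ (1 - θ) := by
        rw [hpθ]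
        exact ENNReal.lintegral_rpow_interpolate_le hW.lintegral_prod_right'.aemeasurable hθ₀ hθ₁
          (by linarith)
    _ ≤ A ^ θ * (C * B) ^ (1 - θ) := by
        gcongr
        exact (lintegral_rpow_lintegral_le_mul_moment μ ν hk hW hbd).trans (by gcongr)

end VelocityMoments

noncomputable def rotationZ (θ : ℝ) : ℝ³ →ₗᵢ[ℝ] ℝ³ where
  toFun v := WithLp.toLp 2 ![v 0 * cos θ + v 1 * sin θ, -(v 0 * sin θ) + v 1 * cos θ, v 2]
  map_add' u v := by ext i; fin_cases i <;> simp <;> ring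
  map_smul' c v := by ext i; fin_cases i <;> simp <;> ring
  norm_map' v := by
    simp only [EuclideanSpace.norm_eq, Fin.sum_univ_three, LinearMap.coe_mk, AddHom.coe_mk]
    congr 1
    simp
    linear_combination (v 0 ^ 2 + v 1 ^ 2) * sin_sq_add_cos_sq θ

theorem Vc_eq_rotationZ (ω s t : ℝ) (v : ℝ³) : Vc ω s t v = rotationZ (ω * (s - t)) v := rfl

theorem norm_Vc (ω s t : ℝ) (v : ℝ³) : ‖Vc ω s t v‖ = ‖v‖ := by
  rw [Vc_eq_rotationZ, LinearIsometry.norm_map]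

theorem Xc_eq_add (ω s t : ℝ) (x v : ℝ³) : Xc ω s t x v = x + Xc ω s t 0 v := by
  ext i; fin_cases i <;> simp [Xc] <;> ring

theorem continuous_Xc (ω s t : ℝ) (x : ℝ³) : Continuous (Xc ω s t x) := by
  refine (PiLp.continuous_toLp 2 _).comp (continuous_pi fun i => ?_)
  fin_cases i <;> simp <;> fun_prop

theorem measurePreserving_characteristics (ω s t : ℝ) :
    MeasurePreserving (fun z : ℝ³ × ℝ³ => (Xc ω s t z.1 z.2, Vc ω s t z.2)) := by
  rw [Measure.volume_eq_prod]
  convert measurePreserving_add_prodMap (μ := (volume : Measure ℝ³))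
    (continuous_Xc ω s t 0).measurable
    ((rotationZ (ω * (s - t))).toLinearIsometryEquiv rfl).measurePreserving using 2 with z
  exact Prod.ext (Xc_eq_add ω s t z.1 z.2) (Vc_eq_rotationZ ω s t z.2)

theorem lintegral_lintegral_comp_characteristics (ω s t : ℝ) {g : ℝ³ × ℝ³ → ℝ≥0∞}
    (hg : Measurable g) :
    ∫⁻ x, ∫⁻ v, g (Xc ω s t x v, Vc ω s t v) = ∫⁻ z, g z := by
  have hT := measurePreserving_characteristics ω s t
  rw [← hT.lintegral_comp hg, Measure.volume_eq_prod]
  exact (lintegral_prod _ (hg.comp hT.measurable).aemeasurable).symm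

theorem lintegral_lintegral_moment_comp_characteristics (ω s t k : ℝ) {f : ℝ³ × ℝ³ → ℝ}
    (hf : Measurable f) :
    ∫⁻ x, ∫⁻ v, ENNReal.ofReal (‖v‖ ^ k) * ENNReal.ofReal (f (Xc ω s t x v, Vc ω s t v)) =
      momentVel k f := by
  rw [momentVel, ← lintegral_lintegral_comp_characteristics ω s t (by fun_prop)]
  refine lintegral_congr fun x => lintegral_congr fun v => ?_
  rw [norm_Vc, ENNReal.ofReal_mul (by positivity)]

theorem rho0_bound_general (ω : ℝ) (k : ℝ) (hk : 3 < k)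
    (fin : EuclideanSpace ℝ (Fin 3) × EuclideanSpace ℝ (Fin 3) → ℝ)
    (hmeas : Measurable fin)
    (hL1 : MemLp fin 1 volume) (hLinf : MemLp fin ⊤ volume)
    (hMk : momentVel k fin < ⊤) :
    ∃ C : ℝ, 0 < C ∧ ∀ t : ℝ, 0 ≤ t →
      (∫⁻ x : EuclideanSpace ℝ (Fin 3),
          (∫⁻ v : EuclideanSpace ℝ (Fin 3),
            ENNReal.ofReal (fin (Xc ω 0 t x v, Vc ω 0 t v))) ^ ((3 * k + 9) / (k + 6)))
        ^ ((k + 6) / (3 * k + 9)) ≤ ENNReal.ofReal C := by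
  have hp : (1 : ℝ) ≤ (3 * k + 9) / (k + 6) := by rw [le_div_iff₀ (by linarith)]; linarith
  have hpq : (3 * k + 9) / (k + 6) ≤ (k + finrank ℝ ℝ³) / finrank ℝ ℝ³ := by
    rw [finrank_euclideanSpace_fin, div_le_div_iff₀ (by linarith) (by norm_num)]
    push_cast
    nlinarith
  obtain ⟨D, hD, hbound⟩ := exists_lintegral_rpow_lintegral_le (volume : Measure ℝ³) volume
    (by linarith) hp hpq hLinf.eLpNorm_ne_top hL1.eLpNorm_ne_top hMk.ne
  refine ⟨(D ^ ((k + 6) / (3 * k + 9))).toReal + 1, by positivity, fun t _ => ?_⟩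
  have hT := measurePreserving_characteristics ω 0 t
  have hf : Measurable fun z => ENNReal.ofReal (fin z) := by fun_prop
  have hsup : ∀ᵐ z ∂volume.prod volume,
      ENNReal.ofReal (fin (Xc ω 0 t z.1 z.2, Vc ω 0 t z.2)) ≤ eLpNorm fin ⊤ volume := by
    rw [← Measure.volume_eq_prod]
    refine hT.quasiMeasurePreserving.ae (p := fun z => ENNReal.ofReal (fin z) ≤ _) ?_
    filter_upwards [ae_le_eLpNormEssSup (f := fin)] with z hz
    exact (ofReal_le_enorm _).trans hz
  have hmass : ∫⁻ x, ∫⁻ v, ENNReal.ofReal (fin (Xc ω 0 t x v, Vc ω 0 t v)) ≤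
      eLpNorm fin 1 volume := by
    rw [lintegral_lintegral_comp_characteristics ω 0 t hf, eLpNorm_one_eq_lintegral_enorm]
    exact lintegral_mono fun z => ofReal_le_enorm _
  calc _ ≤ D ^ ((k + 6) / (3 * k + 9)) :=
        ENNReal.rpow_le_rpow (hbound _ (hf.comp hT.measurable) hsup hmass
          (lintegral_lintegral_moment_comp_characteristics ω 0 t k hmeas).le) (by positivity)
    _ ≤ ENNReal.ofReal ((D ^ ((k + 6) / (3 * k + 9))).toReal + 1) := by
        rw [ENNReal.ofReal_add (by positivity) zero_le_one, ENNReal.ofReal_toReal (by finiteness)]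
        exact le_self_add

/-- with `ρ₀(t,x) = ∫ f^{in}(X(0;t,x,v), V(0;t,x,v)) dv`, there is a
constant `C > 0` (depending only on `k, ‖f^{in}‖₁, ‖f^{in}‖_∞, M_k(f^{in})`) such that
`‖ρ₀(t,·)‖_{L^{(3k+9)/(k+6)}} ≤ C` for all `t ≥ 0`. -/
theorem rho0_bound (ω : ℝ) (hω : 0 < ω) (k : ℝ) (hk : 3 < k)
    (fin : EuclideanSpace ℝ (Fin 3) × EuclideanSpace ℝ (Fin 3) → ℝ)
    (hmeas : Measurable fin) (hpos : ∀ᵐ z ∂(volume), 0 ≤ fin z)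
    (hL1 : MemLp fin 1 volume) (hLinf : MemLp fin ⊤ volume)
    (hMk : momentVel k fin < ⊤) :
    ∃ C : ℝ, 0 < C ∧ ∀ t : ℝ, 0 ≤ t →
      (∫⁻ x : EuclideanSpace ℝ (Fin 3),
          (∫⁻ v : EuclideanSpace ℝ (Fin 3),
            ENNReal.ofReal (fin (Xc ω 0 t x v, Vc ω 0 t v))) ^ ((3 * k + 9) / (k + 6)))
        ^ ((k + 6) / (3 * k + 9)) ≤ ENNReal.ofReal C :=
  rho0_bound_general ω k hk fin hmeas hL1 hLinf hMk
end

section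
/- Let R ≥ 0, ω ≥ 0, t > 0, x, v ∈ ℝ³. Let V: [0,t] → ℝ³ be continuously differentiable with V(t) = v and |V'(s)| ≤ R + ω|V(s)| for all s ∈ [0,t], and let X: [0,t] → ℝ³ satisfy X'(s) = V(s) and X(t) = x. Then |X(0) − (x − t v)| ≤ (R + ω|v|) t² e^{ωt}. -/
/-!
Since `‖V'‖ ≤ (R + ω‖v‖) + ω‖V - v‖`, Grönwall's inequality for `V` run backwards from time `t`
gives `‖V s - v‖ ≤ (R + ω‖v‖) (t - s) e^{ω(t - s)} ≤ (R + ω‖v‖) t e^{ωt}`. The map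
`s ↦ X s - s • v` has derivative `V s - v`, so the mean value inequality turns this uniform bound
into the claim.
-/

open Real Set

lemma exp_sub_one_le_mul_exp (x : ℝ) : exp x - 1 ≤ x * exp x := by
  have h := add_one_le_exp (-x)
  rw [exp_neg] at h
  have hx := exp_pos x
  have := mul_le_mul_of_nonneg_left h hx.le
  rw [mul_inv_cancel₀ hx.ne'] at this
  linarith

lemma gronwallBound_zero_le_mul_exp {K ε : ℝ} (hK : 0 ≤ K) (hε : 0 ≤ ε) (x : ℝ) :
    gronwallBound 0 K ε x ≤ ε * x * exp (K * x) := by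
  rcases hK.eq_or_lt with rfl | hK
  · simp [gronwallBound_K0]
  · calc gronwallBound 0 K ε x = ε / K * (exp (K * x) - 1) := by
          simp [gronwallBound_of_K_ne_0 hK.ne']
      _ ≤ ε / K * (K * x * exp (K * x)) := by
          gcongr
          exact exp_sub_one_le_mul_exp _
      _ = ε * x * exp (K * x) := by field_simp

variable {E : Type*} [NormedAddCommGroup E] [NormedSpace ℝ E]

theorem norm_sub_right_endpoint_le_of_norm_deriv_le {V V' : ℝ → E} {R ω a b : ℝ} (hω : 0 ≤ ω)
    (hV : ∀ s ∈ Icc a b, HasDerivAt V (V' s) s)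
    (hbound : ∀ s ∈ Icc a b, ‖V' s‖ ≤ R + ω * ‖V s‖) :
    ∀ s ∈ Icc a b, ‖V s - V b‖ ≤ (R + ω * ‖V b‖) * (b - s) * exp (ω * (b - s)) := by
  intro s hs
  set ε := R + ω * ‖V b‖
  have hε : 0 ≤ ε := (norm_nonneg _).trans (hbound b ⟨hs.1.trans hs.2, le_rfl⟩)
  -- Gronwall's inequality runs forward in time, so apply it to `V` reflected about `b`.
  set g : ℝ → E := fun u => V (b - u) - V b
  have hmem : ∀ u ∈ Icc 0 (b - a), b - u ∈ Icc a b := fun u hu =>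
    ⟨by linarith [hu.2], by linarith [hu.1]⟩
  have hg : ∀ u ∈ Icc 0 (b - a), HasDerivAt g (-V' (b - u)) u := fun u hu => by
    simpa [g] using ((hV _ (hmem u hu)).scomp u ((hasDerivAt_id u).const_sub b)).sub_const (V b)
  have hgron := norm_le_gronwallBound_of_norm_deriv_right_le (δ := 0) (K := ω) (ε := ε)
    (fun u hu => (hg u hu).continuousAt.continuousWithinAt)
    (fun u hu => (hg u (Ico_subset_Icc_self hu)).hasDerivWithinAt) (by simp [g])
    (fun u hu => by
      calc ‖-V' (b - u)‖ ≤ R + ω * ‖V (b - u)‖ := by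
            rw [norm_neg]; exact hbound _ (hmem u (Ico_subset_Icc_self hu))
        _ ≤ R + ω * (‖g u‖ + ‖V b‖) := by
            gcongr; exact norm_le_norm_sub_add _ _
        _ = ω * ‖g u‖ + ε := by ring)
    (b - s) ⟨by linarith [hs.2], by linarith [hs.1]⟩
  simpa [g] using hgron.trans (gronwallBound_zero_le_mul_exp hω hε _)

theorem norm_sub_sub_smul_le_of_norm_deriv_sub_le {X V : ℝ → E} {v : E} {C a b : ℝ}
    (hab : a ≤ b) (hX : ∀ s ∈ Icc a b, HasDerivAt X (V s) s)
    (hV : ∀ s ∈ Ico a b, ‖V s - v‖ ≤ C) :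
    ‖X b - X a - (b - a) • v‖ ≤ C * (b - a) := by
  have hY : ∀ s ∈ Icc a b, HasDerivWithinAt (X - fun s => s • v) (V s - v) (Icc a b) s :=
    fun s hs => by
      simpa only [one_smul] using ((hX s hs).sub ((hasDerivAt_id' s).smul_const v)).hasDerivWithinAt
  have := norm_image_sub_le_of_norm_deriv_le_segment' hY hV b ⟨hab, le_rfl⟩
  rw [sub_smul]
  convert this using 2
  simp only [Pi.sub_apply]
  abel

theorem spatial_characteristic_bound_general (R ω t : ℝ) (hω : 0 ≤ ω)
    (ht : 0 < t) (x v : EuclideanSpace ℝ (Fin 3))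
    (X V V' : ℝ → EuclideanSpace ℝ (Fin 3))
    (hVderiv : ∀ s ∈ Set.Icc 0 t, HasDerivAt V (V' s) s)
    (hbound : ∀ s ∈ Set.Icc 0 t, ‖V' s‖ ≤ R + ω * ‖V s‖)
    (hVt : V t = v)
    (hXderiv : ∀ s ∈ Set.Icc 0 t, HasDerivAt X (V s) s)
    (hXt : X t = x) :
    ‖X 0 - (x - t • v)‖ ≤ (R + ω * ‖v‖) * t ^ 2 * Real.exp (ω * t) := by
  subst hVt hXt
  have hε : 0 ≤ R + ω * ‖V t‖ := (norm_nonneg _).trans (hbound t ⟨ht.le, le_rfl⟩)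
  have hvelocity : ∀ s ∈ Ico 0 t, ‖V s - V t‖ ≤ (R + ω * ‖V t‖) * t * exp (ω * t) := by
    intro s hs
    refine (norm_sub_right_endpoint_le_of_norm_deriv_le hω hVderiv hbound s
      (Ico_subset_Icc_self hs)).trans ?_
    gcongr <;> linarith [hs.1]
  calc ‖X 0 - (X t - t • V t)‖ = ‖X t - X 0 - (t - 0) • V t‖ := by
        rw [← norm_neg, sub_zero]; congr 1; abel
    _ ≤ (R + ω * ‖V t‖) * t * exp (ω * t) * (t - 0) :=
        norm_sub_sub_smul_le_of_norm_deriv_sub_le ht.le hXderiv hvelocity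
    _ = (R + ω * ‖V t‖) * t ^ 2 * exp (ω * t) := by ring

/-- backward bound on the spatial characteristic: if `V(t) = v`,
`|V'(s)| ≤ R + ω|V(s)|`, `X' = V` and `X(t) = x` on `[0,t]`, then
`|X(0) − (x − t v)| ≤ (R + ω|v|) t² e^{ωt}`. -/
theorem spatial_characteristic_bound (R ω t : ℝ) (hR : 0 ≤ R) (hω : 0 ≤ ω)
    (ht : 0 < t) (x v : EuclideanSpace ℝ (Fin 3))
    (X V V' : ℝ → EuclideanSpace ℝ (Fin 3))
    (hV' : ContinuousOn V' (Set.Icc 0 t))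
    (hVderiv : ∀ s ∈ Set.Icc 0 t, HasDerivAt V (V' s) s)
    (hbound : ∀ s ∈ Set.Icc 0 t, ‖V' s‖ ≤ R + ω * ‖V s‖)
    (hVt : V t = v)
    (hXderiv : ∀ s ∈ Set.Icc 0 t, HasDerivAt X (V s) s)
    (hXt : X t = x) :
    ‖X 0 - (x - t • v)‖ ≤ (R + ω * ‖v‖) * t ^ 2 * Real.exp (ω * t) :=
  spatial_characteristic_bound_general R ω t hω ht x v X V V' hVderiv hbound hVt hXderiv hXt
end
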